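/- arXiv:2112.13097 — 3 statements merged into one kernel-verified Lean document; each statement's English description precedes it below -/
import Mathlib

section
/- If C is an ω-compression operator, g, h ∈ ℝ^d are fixed, α = 1/(1+ω), and h' = h + α·C(g − h), then E[‖h' − g‖²] ≤ (1 − 1/(1+ω))‖h − g‖². -/
/-!
Write `x = g - h` and `α = 1 / (1 + ω)`, so that `h' - g = α C(x) - x`. Since `α C(x)` has mean `α x`,
the bias–variance decomposition gives `E‖h' - g‖² = α² E‖C(x) - x‖² + (1 - α)² ‖x‖²
≤ (α² ω + (1 - α)²) ‖x‖²`, and for this `α` the factor `α² ω + (1 - α)²` equals `1 - α`.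
-/

open MeasureTheory

section BiasVariance

variable {Ω E : Type*} [MeasurableSpace Ω] {μ : Measure Ω}
  [NormedAddCommGroup E] [InnerProductSpace ℝ E] {X : Ω → E}

theorem integrable_norm_sub_sq [IsFiniteMeasure μ] (hX : Integrable X μ)
    (hX2 : Integrable (fun ω => ‖X ω‖ ^ 2) μ) (c : E) :
    Integrable (fun ω => ‖X ω - c‖ ^ 2) μ := by
  simp_rw [norm_sub_sq_real]
  exact ((hX2.sub ((hX.inner_const c).const_mul 2)).add (integrable_const _))

theorem integral_inner_sub_integral_eq_zero [CompleteSpace E] [IsProbabilityMeasure μ]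
    (hX : Integrable X μ) (v : E) : ∫ ω, inner ℝ v (X ω - ∫ ω', X ω' ∂μ) ∂μ = 0 := by
  simp_rw [inner_sub_right]
  rw [integral_sub (hX.const_inner v) (integrable_const _), integral_inner hX]
  simp

theorem integral_norm_sub_sq_eq [CompleteSpace E] [IsProbabilityMeasure μ]
    (hX : Integrable X μ) (hX2 : Integrable (fun ω => ‖X ω‖ ^ 2) μ) (c : E) :
    ∫ ω, ‖X ω - c‖ ^ 2 ∂μ
      = ∫ ω, ‖X ω - ∫ ω', X ω' ∂μ‖ ^ 2 ∂μ + ‖(∫ ω, X ω ∂μ) - c‖ ^ 2 := by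
  set m := ∫ ω, X ω ∂μ
  have hsplit : ∀ ω, ‖X ω - c‖ ^ 2
      = ‖X ω - m‖ ^ 2 + 2 * inner ℝ (m - c) (X ω - m) + ‖m - c‖ ^ 2 := fun ω => by
    rw [real_inner_comm, ← norm_add_sq_real, sub_add_sub_cancel]
  have hvar := integrable_norm_sub_sq hX hX2 m
  have hcross : Integrable (fun ω => 2 * inner ℝ (m - c) (X ω - m)) μ :=
    ((hX.sub (integrable_const m)).const_inner (m - c)).const_mul 2
  have hsum : Integrable (fun ω => ‖X ω - m‖ ^ 2 + 2 * inner ℝ (m - c) (X ω - m)) μ :=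
    hvar.add hcross
  simp_rw [hsplit]
  rw [integral_add hsum (integrable_const _), integral_add hvar hcross,
    integral_const_mul, integral_inner_sub_integral_eq_zero hX]
  simp

end BiasVariance

theorem integral_norm_smul_sub_sq_le {Ω E : Type*} [MeasurableSpace Ω] {μ : Measure Ω}
    [IsProbabilityMeasure μ] [NormedAddCommGroup E] [InnerProductSpace ℝ E] [CompleteSpace E]
    {Y : Ω → E} {y : E} {w : ℝ} (hmean : ∫ ω, Y ω ∂μ = y)
    (hvar : ∫ ω, ‖Y ω - y‖ ^ 2 ∂μ ≤ w * ‖y‖ ^ 2) (hY : Integrable Y μ)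
    (hY2 : Integrable (fun ω => ‖Y ω‖ ^ 2) μ) (α : ℝ) :
    ∫ ω, ‖α • Y ω - y‖ ^ 2 ∂μ ≤ (α ^ 2 * w + (1 - α) ^ 2) * ‖y‖ ^ 2 := by
  have hαY : Integrable (fun ω => α • Y ω) μ := hY.smul α
  have hαY2 : Integrable (fun ω => ‖α • Y ω‖ ^ 2) μ := by
    simpa only [norm_smul, mul_pow] using hY2.const_mul (‖α‖ ^ 2)
  have hαmean : ∫ ω, α • Y ω ∂μ = α • y := by rw [integral_smul, hmean]
  have hscale : ∀ ω, ‖α • Y ω - α • y‖ ^ 2 = α ^ 2 * ‖Y ω - y‖ ^ 2 := fun ω => by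
    rw [← smul_sub, norm_smul, mul_pow, Real.norm_eq_abs, sq_abs]
  have hbias : ‖α • y - y‖ ^ 2 = (1 - α) ^ 2 * ‖y‖ ^ 2 := by
    rw [norm_sub_rev, show y - α • y = (1 - α) • y by rw [sub_smul, one_smul], norm_smul,
      mul_pow, Real.norm_eq_abs, sq_abs]
  calc ∫ ω, ‖α • Y ω - y‖ ^ 2 ∂μ
      = α ^ 2 * ∫ ω, ‖Y ω - y‖ ^ 2 ∂μ + (1 - α) ^ 2 * ‖y‖ ^ 2 := by
        rw [integral_norm_sub_sq_eq hαY hαY2, hαmean]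
        simp_rw [hscale, integral_const_mul, hbias]
    _ ≤ α ^ 2 * (w * ‖y‖ ^ 2) + (1 - α) ^ 2 * ‖y‖ ^ 2 := by gcongr
    _ = (α ^ 2 * w + (1 - α) ^ 2) * ‖y‖ ^ 2 := by ring

/-- With Lean's convention `1 / 0 = 0` this also holds at `w = -1`. -/
theorem one_div_one_add_sq_mul_add_one_sub_sq (w : ℝ) :
    (1 / (1 + w)) ^ 2 * w + (1 - 1 / (1 + w)) ^ 2 = 1 - 1 / (1 + w) := by
  rcases eq_or_ne (1 + w) 0 with hw | hw
  · simp [hw]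
  · field_simp
    ring

theorem compression_shift_contraction_general {d : ℕ} {Ω : Type*} [MeasurableSpace Ω]
    (μ : Measure Ω) [IsProbabilityMeasure μ] (w : ℝ)
    (C : EuclideanSpace ℝ (Fin d) → Ω → EuclideanSpace ℝ (Fin d))
    (hCmean : ∀ y, ∫ ω, C y ω ∂μ = y)
    (hCvar : ∀ y, ∫ ω, ‖C y ω - y‖ ^ 2 ∂μ ≤ w * ‖y‖ ^ 2)
    (hCint : ∀ y, Integrable (C y) μ)
    (hCint2 : ∀ y, Integrable (fun ω => ‖C y ω‖ ^ 2) μ)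
    (g h : EuclideanSpace ℝ (Fin d)) :
    ∫ ω, ‖h + (1 / (1 + w)) • C (g - h) ω - g‖ ^ 2 ∂μ
      ≤ (1 - 1 / (1 + w)) * ‖h - g‖ ^ 2 := by
  have hshift : ∀ ω, h + (1 / (1 + w)) • C (g - h) ω - g
      = (1 / (1 + w)) • C (g - h) ω - (g - h) := fun ω => by abel
  simp_rw [hshift]
  rw [norm_sub_rev h g, ← one_div_one_add_sq_mul_add_one_sub_sq w]
  exact integral_norm_smul_sub_sq_le (hCmean _) (hCvar _) (hCint _) (hCint2 _) _

theorem compression_shift_contraction {d : ℕ} {Ω : Type*} [MeasurableSpace Ω]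
    (μ : Measure Ω) [IsProbabilityMeasure μ] (w : ℝ) (hw : 0 ≤ w)
    (C : EuclideanSpace ℝ (Fin d) → Ω → EuclideanSpace ℝ (Fin d))
    (hCmean : ∀ y, ∫ ω, C y ω ∂μ = y)
    (hCvar : ∀ y, ∫ ω, ‖C y ω - y‖ ^ 2 ∂μ ≤ w * ‖y‖ ^ 2)
    (hCint : ∀ y, Integrable (C y) μ)
    (hCint2 : ∀ y, Integrable (fun ω => ‖C y ω‖ ^ 2) μ)
    (g h : EuclideanSpace ℝ (Fin d)) :
    ∫ ω, ‖h + (1 / (1 + w)) • C (g - h) ω - g‖ ^ 2 ∂μ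
      ≤ (1 - 1 / (1 + w)) * ‖h - g‖ ^ 2 :=
  compression_shift_contraction_general μ w C hCmean hCvar hCint hCint2 g h
end

section
/- Under the setup of the unbiased compressed estimator with a single uniformly sampled client: g = C(∇f_S(x) − h_S) + h with h = (1/N)∑ᵢ hᵢ, the variance satisfies E[‖g − ∇f(x)‖²] ≤ (1+ω)·(1/N)∑ᵢ₌₁^N ‖∇fᵢ(x) − hᵢ‖². -/
/-!
Write `aᵢ = ∇fᵢ(x) - hᵢ` and `ā` for their mean; since `∇f(x) = (1/N) ∑ ∇fᵢ(x)`, the error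
`g - ∇f(x)` is `C(a_S) - ā`. For fixed `S = i`, the bias–variance decomposition and unbiasedness of
`C` give `E‖C(aᵢ) - ā‖² = E‖C(aᵢ) - aᵢ‖² + ‖aᵢ - ā‖² ≤ ω‖aᵢ‖² + ‖aᵢ - ā‖²`. Averaging over `i`,
the same decomposition for the empirical distribution of the `aᵢ` gives
`(1/N) ∑ ‖aᵢ - ā‖² = (1/N) ∑ ‖aᵢ‖² - ‖ā‖² ≤ (1/N) ∑ ‖aᵢ‖²`.
-/

open MeasureTheory Finset

section Gradient

variable {F : Type*} [NormedAddCommGroup F] [InnerProductSpace ℝ F] [CompleteSpace F]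
  {ι : Type*} {s : Finset ι} {f : ι → F → ℝ} {x : F}

theorem gradient_const_mul_sum (hf : ∀ i ∈ s, DifferentiableAt ℝ (f i) x) (c : ℝ) :
    gradient (fun y => c * ∑ i ∈ s, f i y) x = c • ∑ i ∈ s, gradient (f i) x := by
  simp only [gradient, fderiv_const_mul (DifferentiableAt.fun_sum hf), fderiv_fun_sum hf,
    map_smul, map_sum]

end Gradient

section Expectation

variable {E : Type*} [NormedAddCommGroup E] [InnerProductSpace ℝ E] [CompleteSpace E]
  {Ω : Type*} [MeasurableSpace Ω] {μ : Measure Ω} [IsProbabilityMeasure μ] {X : Ω → E}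

theorem integral_norm_add_sq (hX : Integrable X μ) (hX2 : Integrable (fun ω => ‖X ω‖ ^ 2) μ)
    (k : E) :
    ∫ ω, ‖X ω + k‖ ^ 2 ∂μ = ∫ ω, ‖X ω‖ ^ 2 ∂μ + 2 * inner ℝ (∫ ω, X ω ∂μ) k + ‖k‖ ^ 2 := by
  have hinner : Integrable (fun ω => 2 * inner ℝ k (X ω)) μ := (hX.const_inner k).const_mul 2
  simp_rw [norm_add_sq_real, real_inner_comm k]
  rw [integral_add (hX2.fun_add hinner) (integrable_const _), integral_add hX2 hinner,
    integral_const_mul, integral_inner hX, integral_const, probReal_univ, one_smul,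
    real_inner_comm]

theorem integral_norm_add_sq_eq_variance_add (hX : Integrable X μ)
    (hX2 : Integrable (fun ω => ‖X ω‖ ^ 2) μ) (k : E) :
    ∫ ω, ‖X ω + k‖ ^ 2 ∂μ =
      ∫ ω, ‖X ω - ∫ ω', X ω' ∂μ‖ ^ 2 ∂μ + ‖∫ ω, X ω ∂μ + k‖ ^ 2 := by
  simp_rw [sub_eq_add_neg _ (∫ ω', X ω' ∂μ)]
  rw [integral_norm_add_sq hX hX2, integral_norm_add_sq hX hX2, norm_add_sq_real,
    inner_neg_right, real_inner_self_eq_norm_sq, norm_neg]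
  ring

end Expectation

section Mean

variable {E : Type*} [NormedAddCommGroup E] [InnerProductSpace ℝ E] {ι : Type*} (s : Finset ι)
  (a : ι → E)

theorem sum_norm_add_sq (k : E) :
    ∑ i ∈ s, ‖a i + k‖ ^ 2 = ∑ i ∈ s, ‖a i‖ ^ 2 + 2 * inner ℝ (∑ i ∈ s, a i) k + #s * ‖k‖ ^ 2 := by
  simp only [norm_add_sq_real, sum_add_distrib, ← mul_sum, sum_inner, sum_const, nsmul_eq_mul]

theorem inv_card_mul_sum_norm_sub_mean_sq :
    (#s : ℝ)⁻¹ * ∑ i ∈ s, ‖a i - (#s : ℝ)⁻¹ • ∑ j ∈ s, a j‖ ^ 2 =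
      (#s : ℝ)⁻¹ * ∑ i ∈ s, ‖a i‖ ^ 2 - ‖(#s : ℝ)⁻¹ • ∑ j ∈ s, a j‖ ^ 2 := by
  rcases s.eq_empty_or_nonempty with rfl | hs
  · simp
  have hcard : (#s : ℝ) ≠ 0 := by exact_mod_cast hs.card_ne_zero
  simp_rw [sub_eq_add_neg, sum_norm_add_sq, norm_neg, inner_neg_right, inner_smul_right,
    real_inner_self_eq_norm_sq, norm_smul, Real.norm_eq_abs, abs_inv, Nat.abs_cast]
  field_simp
  ring

theorem inv_card_mul_sum_norm_sub_mean_sq_le :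
    (#s : ℝ)⁻¹ * ∑ i ∈ s, ‖a i - (#s : ℝ)⁻¹ • ∑ j ∈ s, a j‖ ^ 2 ≤
      (#s : ℝ)⁻¹ * ∑ i ∈ s, ‖a i‖ ^ 2 := by
  rw [inv_card_mul_sum_norm_sub_mean_sq]
  exact sub_le_self _ (sq_nonneg _)

end Mean

theorem compressed_estimator_variance_general {d N : ℕ}
    {Ω : Type*} [MeasurableSpace Ω] (μ : Measure Ω) [IsProbabilityMeasure μ]
    (w : ℝ)
    (C : EuclideanSpace ℝ (Fin d) → Ω → EuclideanSpace ℝ (Fin d))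
    (hCmean : ∀ y, ∫ ω, C y ω ∂μ = y)
    (hCvar : ∀ y, ∫ ω, ‖C y ω - y‖ ^ 2 ∂μ ≤ w * ‖y‖ ^ 2)
    (hCint : ∀ y, Integrable (C y) μ)
    (hCint2 : ∀ y, Integrable (fun ω => ‖C y ω‖ ^ 2) μ)
    (f : Fin N → EuclideanSpace ℝ (Fin d) → ℝ)
    (hdiff : ∀ i, Differentiable ℝ (f i))
    (hvec : Fin N → EuclideanSpace ℝ (Fin d))
    (x : EuclideanSpace ℝ (Fin d)) :
    (N : ℝ)⁻¹ * ∑ i : Fin N,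
        (∫ ω, ‖C (gradient (f i) x - hvec i) ω + (N : ℝ)⁻¹ • ∑ j : Fin N, hvec j
            - gradient (fun y => (N : ℝ)⁻¹ * ∑ k : Fin N, f k y) x‖ ^ 2 ∂μ)
      ≤ (1 + w) * ((N : ℝ)⁻¹ * ∑ i : Fin N, ‖gradient (f i) x - hvec i‖ ^ 2) := by
  set a : Fin N → EuclideanSpace ℝ (Fin d) := fun i => gradient (f i) x - hvec i
  set abar := (N : ℝ)⁻¹ • ∑ j, a j
  have hshift :
      (N : ℝ)⁻¹ • ∑ j, hvec j - gradient (fun y => (N : ℝ)⁻¹ * ∑ k, f k y) x = -abar := by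
    rw [gradient_const_mul_sum fun k _ => hdiff k x]
    simp only [abar, a, sum_sub_distrib, smul_sub]
    abel
  have hmean := inv_card_mul_sum_norm_sub_mean_sq_le univ a
  simp only [card_univ, Fintype.card_fin] at hmean
  simp_rw [add_sub_assoc, hshift]
  calc (N : ℝ)⁻¹ * ∑ i, ∫ ω, ‖C (a i) ω + (-abar)‖ ^ 2 ∂μ
      ≤ (N : ℝ)⁻¹ * ∑ i, (w * ‖a i‖ ^ 2 + ‖a i - abar‖ ^ 2) := by
        gcongr with i
        rw [integral_norm_add_sq_eq_variance_add (hCint _) (hCint2 _), hCmean, ← sub_eq_add_neg]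
        exact add_le_add_left (hCvar _) _
    _ ≤ (1 + w) * ((N : ℝ)⁻¹ * ∑ i, ‖a i‖ ^ 2) := by
        rw [sum_add_distrib, ← mul_sum]
        linarith

theorem compressed_estimator_variance {d N : ℕ} (hN : 0 < N)
    {Ω : Type*} [MeasurableSpace Ω] (μ : Measure Ω) [IsProbabilityMeasure μ]
    (w : ℝ) (hw : 0 ≤ w)
    (C : EuclideanSpace ℝ (Fin d) → Ω → EuclideanSpace ℝ (Fin d))
    (hCmean : ∀ y, ∫ ω, C y ω ∂μ = y)
    (hCvar : ∀ y, ∫ ω, ‖C y ω - y‖ ^ 2 ∂μ ≤ w * ‖y‖ ^ 2)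
    (hCint : ∀ y, Integrable (C y) μ)
    (hCint2 : ∀ y, Integrable (fun ω => ‖C y ω‖ ^ 2) μ)
    (f : Fin N → EuclideanSpace ℝ (Fin d) → ℝ)
    (hdiff : ∀ i, Differentiable ℝ (f i))
    (hvec : Fin N → EuclideanSpace ℝ (Fin d))
    (x : EuclideanSpace ℝ (Fin d)) :
    (N : ℝ)⁻¹ * ∑ i : Fin N,
        (∫ ω, ‖C (gradient (f i) x - hvec i) ω + (N : ℝ)⁻¹ • ∑ j : Fin N, hvec j
            - gradient (fun y => (N : ℝ)⁻¹ * ∑ k : Fin N, f k y) x‖ ^ 2 ∂μ)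
      ≤ (1 + w) * ((N : ℝ)⁻¹ * ∑ i : Fin N, ‖gradient (f i) x - hvec i‖ ^ 2) :=
  compressed_estimator_variance_general μ w C hCmean hCvar hCint hCint2 f hdiff hvec x
end

section
/- If each fᵢ is convex and L-smooth with common minimizer structure f = (1/N)∑fᵢ minimized at x*, then (1/N)∑ᵢ₌₁^N ‖∇fᵢ(x) − ∇fᵢ(x*)‖² ≤ 2L(f(x) − f(x*)) for all x. -/
/-!
Each `fᵢ` is co-coercive: `‖∇fᵢ x - ∇fᵢ y‖² ≤ 2L · D(x, y)`, where `D` is the Bregman divergence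
of `fᵢ`. This follows by bounding `D` at the gradient step `z = x - L⁻¹ (∇fᵢ x - ∇fᵢ y)` below by
convexity and above by the descent lemma `D ≤ L/2 ‖·‖²`. Averaging at `y = x*`, the linear terms
`⟪∇fᵢ x*, x - x*⟫` average to `⟪∇f x*, x - x*⟫ = 0`, which leaves `f x - f x*`.
-/

open scoped RealInnerProductSpace

lemma image_one_le_of_deriv_sub_le_mul {g g' : ℝ → ℝ} {M : ℝ}
    (hg : ∀ t ∈ Set.Icc (0 : ℝ) 1, HasDerivAt g (g' t) t)
    (hg' : ∀ t ∈ Set.Ioo (0 : ℝ) 1, g' t - g' 0 ≤ M * t) :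
    g 1 ≤ g 0 + g' 0 + M / 2 := by
  -- the gap between the quadratic model of `g` at `0` and `g` itself grows on `[0, 1]`
  set q : ℝ → ℝ := fun t => g 0 + t * g' 0 + M / 2 * t ^ 2 - g t
  have hq : ∀ t ∈ Set.Icc (0 : ℝ) 1, HasDerivAt q (g' 0 + M * t - g' t) t := fun t ht => by
    refine ((((hasDerivAt_id t).mul_const (g' 0)).const_add (g 0)).fun_add
      ((hasDerivAt_pow 2 t).const_mul (M / 2))).fun_sub (hg t ht) |>.congr_deriv ?_
    ring
  have hmono : MonotoneOn q (Set.Icc 0 1) := by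
    refine monotoneOn_of_hasDerivWithinAt_nonneg (f' := fun t => g' 0 + M * t - g' t)
      (convex_Icc 0 1) (fun t ht => (hq t ht).continuousAt.continuousWithinAt)
      (fun t ht => ?_) (fun t ht => ?_)
    · exact (hq t (interior_subset ht)).hasDerivWithinAt
    · rw [interior_Icc] at ht
      linarith [hg' t ht]
  have := hmono (Set.left_mem_Icc.2 zero_le_one) (Set.right_mem_Icc.2 zero_le_one) zero_le_one
  simp only [q] at this
  linarith

variable {E : Type*} [NormedAddCommGroup E] [InnerProductSpace ℝ E] [CompleteSpace E]
  {h : E → ℝ}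

noncomputable def bregmanDiv (h : E → ℝ) (x y : E) : ℝ := h x - h y - ⟪gradient h y, x - y⟫

lemma bregmanDiv_add_bregmanDiv (h : E → ℝ) (x y z : E) :
    bregmanDiv h z x + bregmanDiv h x y =
      bregmanDiv h z y - ⟪gradient h x - gradient h y, z - x⟫ := by
  simp only [bregmanDiv, inner_sub_left, inner_sub_right]
  ring

lemma hasDerivAt_comp_add_smul {a v : E} {t : ℝ} (hd : DifferentiableAt ℝ h (a + t • v)) :
    HasDerivAt (fun s : ℝ => h (a + s • v)) ⟪gradient h (a + t • v), v⟫ t := by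
  rw [inner_gradient_left]
  exact hd.hasFDerivAt.comp_hasDerivAt t
    (by simpa using ((hasDerivAt_id t).smul_const v).const_add a)

lemma ConvexOn.bregmanDiv_nonneg {s : Set E} (hc : ConvexOn ℝ s h) {x y : E} (hx : x ∈ s)
    (hy : y ∈ s) (hd : DifferentiableAt ℝ h y) : 0 ≤ bregmanDiv h x y := by
  have hline : ConvexOn ℝ (AffineMap.lineMap y x ⁻¹' s) (fun t : ℝ => h (y + t • (x - y))) := by
    have hcomp : (fun t : ℝ => h (y + t • (x - y))) = h ∘ AffineMap.lineMap y x := by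
      funext t
      simp [AffineMap.lineMap_apply_module', add_comm]
    rw [hcomp]
    exact hc.comp_affineMap _
  have := hline.le_slope_of_hasDerivAt (x := 0) (y := 1) (by simpa) (by simpa) one_pos
    (hasDerivAt_comp_add_smul (by simpa))
  rw [slope_def_field] at this
  simp only [zero_smul, add_zero, one_smul, add_sub_cancel] at this
  simp only [bregmanDiv]
  linarith

lemma bregmanDiv_le_of_lipschitz_gradient (hd : Differentiable ℝ h) {L : ℝ}
    (hL : ∀ p q, ‖gradient h p - gradient h q‖ ≤ L * ‖p - q‖) (x y : E) :
    bregmanDiv h x y ≤ L / 2 * ‖x - y‖ ^ 2 := by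
  have := image_one_le_of_deriv_sub_le_mul (M := L * ‖x - y‖ ^ 2)
    (fun t _ => hasDerivAt_comp_add_smul (a := y) (v := x - y) (hd _)) fun t ht => by
      rw [← inner_sub_left]
      calc ⟪gradient h (y + t • (x - y)) - gradient h (y + (0:ℝ) • (x - y)), x - y⟫
          ≤ ‖gradient h (y + t • (x - y)) - gradient h (y + (0:ℝ) • (x - y))‖ * ‖x - y‖ :=
            real_inner_le_norm _ _
        _ ≤ L * ‖t • (x - y)‖ * ‖x - y‖ := by
            gcongr
            simpa using hL (y + t • (x - y)) y
        _ = L * ‖x - y‖ ^ 2 * t := by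
            rw [norm_smul, Real.norm_of_nonneg ht.1.le]; ring
  simp only [zero_smul, add_zero, one_smul, add_sub_cancel] at this
  simp only [bregmanDiv]
  linarith

lemma norm_sub_gradient_sq_le_bregmanDiv (hd : Differentiable ℝ h)
    (hc : ConvexOn ℝ Set.univ h) {L : ℝ}
    (hL : ∀ p q, ‖gradient h p - gradient h q‖ ≤ L * ‖p - q‖) (x y : E) :
    ‖gradient h x - gradient h y‖ ^ 2 ≤ 2 * L * bregmanDiv h x y := by
  rcases le_or_gt L 0 with hL0 | hL0
  · have hnn := hc.bregmanDiv_nonneg (Set.mem_univ x) (Set.mem_univ y) (hd y)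
    have hup := bregmanDiv_le_of_lipschitz_gradient hd hL x y
    have hD : bregmanDiv h x y = 0 :=
      le_antisymm (hup.trans (mul_nonpos_of_nonpos_of_nonneg (by linarith) (by positivity))) hnn
    have hg : ‖gradient h x - gradient h y‖ = 0 :=
      le_antisymm ((hL x y).trans (mul_nonpos_of_nonpos_of_nonneg hL0 (norm_nonneg _)))
        (norm_nonneg _)
    simp [hD, hg]
  set g := gradient h x - gradient h y
  set z := x - L⁻¹ • g
  have hzx : z - x = -(L⁻¹ • g) := by simp [z]
  have hsplit := bregmanDiv_add_bregmanDiv h x y z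
  have hzy := hc.bregmanDiv_nonneg (Set.mem_univ z) (Set.mem_univ y) (hd y)
  have hzx_le := bregmanDiv_le_of_lipschitz_gradient hd hL z x
  rw [hzx, norm_neg, norm_smul, Real.norm_of_nonneg (inv_nonneg.2 hL0.le)] at hzx_le
  rw [hzx, inner_neg_right, real_inner_smul_right, real_inner_self_eq_norm_sq] at hsplit
  have hhalf : L / 2 * (L⁻¹ * ‖g‖) ^ 2 = L⁻¹ * ‖g‖ ^ 2 / 2 := by field_simp
  have hlow : L⁻¹ * ‖g‖ ^ 2 / 2 ≤ bregmanDiv h x y := by linarith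
  calc ‖g‖ ^ 2 = 2 * L * (L⁻¹ * ‖g‖ ^ 2 / 2) := by field_simp
    _ ≤ 2 * L * bregmanDiv h x y := by gcongr

lemma IsLocalMin.mul_sum_inner_gradient_eq_zero {ι : Type*} {s : Finset ι} {f : ι → E → ℝ}
    {c : ℝ} {x : E} (hd : ∀ i ∈ s, DifferentiableAt ℝ (f i) x)
    (hmin : IsLocalMin (fun y => c * ∑ i ∈ s, f i y) x) (v : E) :
    c * ∑ i ∈ s, ⟪gradient (f i) x, v⟫ = 0 := by
  have hderiv := hmin.hasFDerivAt_eq_zero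
    ((HasFDerivAt.fun_sum fun i hi => (hd i hi).hasFDerivAt).const_mul c)
  simpa [inner_gradient_left] using congrArg (· v) hderiv

theorem avg_grad_diff_sq_le_two_L_gap_general {d N : ℕ}
    (f : Fin N → EuclideanSpace ℝ (Fin d) → ℝ) (L : ℝ)
    (hdiff : ∀ i, Differentiable ℝ (f i))
    (hconv : ∀ i, ConvexOn ℝ Set.univ (f i))
    (hsmooth : ∀ i x y, ‖gradient (f i) x - gradient (f i) y‖ ≤ L * ‖x - y‖)
    (xstar : EuclideanSpace ℝ (Fin d))
    (hmin : ∀ y, (N : ℝ)⁻¹ * ∑ i : Fin N, f i xstar ≤ (N : ℝ)⁻¹ * ∑ i : Fin N, f i y)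
    (x : EuclideanSpace ℝ (Fin d)) :
    (N : ℝ)⁻¹ * ∑ i : Fin N, ‖gradient (f i) x - gradient (f i) xstar‖ ^ 2
      ≤ 2 * L * ((N : ℝ)⁻¹ * ∑ i : Fin N, f i x - (N : ℝ)⁻¹ * ∑ i : Fin N, f i xstar) := by
  have hstat := IsLocalMin.mul_sum_inner_gradient_eq_zero (fun i _ => hdiff i xstar)
    (Filter.Eventually.of_forall hmin) (x - xstar)
  calc (N : ℝ)⁻¹ * ∑ i : Fin N, ‖gradient (f i) x - gradient (f i) xstar‖ ^ 2
      ≤ (N : ℝ)⁻¹ * ∑ i : Fin N, 2 * L * bregmanDiv (f i) x xstar := by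
        gcongr with i
        exact norm_sub_gradient_sq_le_bregmanDiv (hdiff i) (hconv i) (hsmooth i) x xstar
    _ = 2 * L * ((N : ℝ)⁻¹ * ∑ i : Fin N, f i x - (N : ℝ)⁻¹ * ∑ i : Fin N, f i xstar)
          - 2 * L * ((N : ℝ)⁻¹ * ∑ i : Fin N, ⟪gradient (f i) xstar, x - xstar⟫) := by
        simp only [bregmanDiv, ← Finset.mul_sum, Finset.sum_sub_distrib]
        ring
    _ = _ := by rw [hstat]; ring

theorem avg_grad_diff_sq_le_two_L_gap {d N : ℕ} (hN : 0 < N)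
    (f : Fin N → EuclideanSpace ℝ (Fin d) → ℝ) (L : ℝ)
    (hdiff : ∀ i, Differentiable ℝ (f i))
    (hconv : ∀ i, ConvexOn ℝ Set.univ (f i))
    (hsmooth : ∀ i x y, ‖gradient (f i) x - gradient (f i) y‖ ≤ L * ‖x - y‖)
    (xstar : EuclideanSpace ℝ (Fin d))
    (hmin : ∀ y, (N : ℝ)⁻¹ * ∑ i : Fin N, f i xstar ≤ (N : ℝ)⁻¹ * ∑ i : Fin N, f i y)
    (x : EuclideanSpace ℝ (Fin d)) :
    (N : ℝ)⁻¹ * ∑ i : Fin N, ‖gradient (f i) x - gradient (f i) xstar‖ ^ 2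
      ≤ 2 * L * ((N : ℝ)⁻¹ * ∑ i : Fin N, f i x - (N : ℝ)⁻¹ * ∑ i : Fin N, f i xstar) :=
  avg_grad_diff_sq_le_two_L_gap_general f L hdiff hconv hsmooth xstar hmin x
end
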